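/- For every real s > 0, the Witten zeta function of SU(n), ζ(s; n) = Σ_{(ρ,W) ∈ irreducible unitary reps of SU(n)} (dim W)^{−s}, converges for all sufficiently large n and satisfies lim_{n→∞} ζ(s; n) = 1. -/

import Mathlib

open Finset Filter Real

/-- The Weyl dimension formula for the irreducible representation `W_n^λ` of `SU(n)`
attached to a Young diagram `λ` with fewer than `n` rows. -/
noncomputable def weylDim (n : ℕ) (lam : YoungDiagram) : ℝ :=
  ∏ p ∈ (Finset.range n ×ˢ Finset.range n).filter (fun p => p.1 < p.2),
    (((lam.rowLen p.1 : ℝ) - (lam.rowLen p.2 : ℝ) + (p.2 : ℝ) - (p.1 : ℝ)) /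
      ((p.2 : ℝ) - (p.1 : ℝ)))

/-- The Witten zeta function of `SU(n)`: the sum of `(dim W)^{-s}` over the (equivalence
classes of) irreducible unitary representations of `SU(n)`, which are parametrized by
Young diagrams with at most `n-1` rows. -/
noncomputable def wittenZetaSU (n : ℕ) (s : ℝ) : ℝ :=
  ∑' lam : {l : YoungDiagram // l.colLen 0 < n}, (weylDim n (lam : YoungDiagram)) ^ (-s)

/-!
Write `g_t = λ_t - λ_{t+1}` for the gaps of `λ`. The numerator of the Weyl factor of a pair `i < j`
is `∑_{i ≤ t < j} (g_t + 1)`, so AM-GM bounds `dim W_λ` below by `∏_t (g_t + 1) ^ w_t`, where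
`w_t = ∑_{i ≤ t < j < n} 1 / (j - i)`. As `λ` is determined by its gaps, `ζ(s; n)` is at most
`∏_t ∑_m (m + 1) ^ (-s w_t)`. Each `w_t` is at least a harmonic number `≥ log (n / 2 + 1)` and at
least `min (t + 1) (n - 1 - t) / 2`. Hence, once `s w_t ≥ 2`, every factor is
`1 + O(2 ^ (-s w_t))`, and `∑_t 2 ^ (-s w_t) = O(2 ^ (-s log (n / 2 + 1) / 2)) → 0`.
So `1 ≤ ζ(s; n) ≤ exp (C ∑_t 2 ^ (-s w_t)) → 1`.
-/

open Topology

namespace YoungDiagram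

def gap (μ : YoungDiagram) (t : ℕ) : ℕ := μ.rowLen t - μ.rowLen (t + 1)

theorem rowLen_eq_add_sum_gap (μ : YoungDiagram) {i j : ℕ} (hij : i ≤ j) :
    μ.rowLen i = μ.rowLen j + ∑ t ∈ Ico i j, μ.gap t := by
  induction j, hij using Nat.le_induction with
  | base => simp
  | succ j hij ih =>
    rw [sum_Ico_succ_top hij, ih, gap]
    have := μ.rowLen_anti j (j + 1) j.le_succ
    omega

theorem rowLen_eq_zero_of_colLen_le {μ : YoungDiagram} {i : ℕ} (hi : μ.colLen 0 ≤ i) :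
    μ.rowLen i = 0 := by
  by_contra h
  have := mem_iff_lt_colLen.1 (mem_iff_lt_rowLen.2 (Nat.pos_of_ne_zero h))
  omega

theorem ext_rowLen {μ ν : YoungDiagram} (h : ∀ i, μ.rowLen i = ν.rowLen i) : μ = ν := by
  ext ⟨i, j⟩
  simp only [mem_cells, mem_iff_lt_rowLen, h]

theorem eq_of_gap_eq {n : ℕ} {μ ν : YoungDiagram} (hμ : μ.colLen 0 < n) (hν : ν.colLen 0 < n)
    (h : ∀ t < n - 1, μ.gap t = ν.gap t) : μ = ν := by
  refine ext_rowLen fun i => ?_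
  rcases le_or_gt (n - 1) i with hi | hi
  · rw [rowLen_eq_zero_of_colLen_le (by omega), rowLen_eq_zero_of_colLen_le (by omega)]
  · rw [μ.rowLen_eq_add_sum_gap hi.le, ν.rowLen_eq_add_sum_gap hi.le,
      rowLen_eq_zero_of_colLen_le (μ := μ) (by omega),
      rowLen_eq_zero_of_colLen_le (μ := ν) (by omega)]
    exact congrArg _ (sum_congr rfl fun t ht => h t (mem_Ico.1 ht).2)

theorem rowLen_bot (i : ℕ) : (⊥ : YoungDiagram).rowLen i = 0 := by
  simp [rowLen]

end YoungDiagram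

open YoungDiagram

noncomputable def weylWeight (n t : ℕ) : ℝ := ∑ p ∈ range (t + 1) ×ˢ Ioo t n, ((p.2 : ℝ) - p.1)⁻¹

theorem rowLen_sub_rowLen_add_eq_sum (μ : YoungDiagram) {i j : ℕ} (hij : i ≤ j) :
    (μ.rowLen i : ℝ) - μ.rowLen j + j - i = ∑ t ∈ Ico i j, ((μ.gap t : ℝ) + 1) := by
  rw [sum_add_distrib, sum_const, Nat.card_Ico, nsmul_one, μ.rowLen_eq_add_sum_gap hij]
  push_cast [hij]
  ring

theorem prod_gap_rpow_le_weylFactor (μ : YoungDiagram) {i j : ℕ} (hij : i < j) :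
    ∏ t ∈ Ico i j, ((μ.gap t : ℝ) + 1) ^ ((j : ℝ) - i)⁻¹ ≤
      ((μ.rowLen i : ℝ) - μ.rowLen j + j - i) / ((j : ℝ) - i) := by
  have hji : (0 : ℝ) < j - i := sub_pos.2 (Nat.cast_lt.2 hij)
  have hweights : ∑ _t ∈ Ico i j, ((j : ℝ) - i)⁻¹ = 1 := by
    rw [sum_const, Nat.card_Ico, nsmul_eq_mul, Nat.cast_sub hij.le, mul_inv_cancel₀ hji.ne']
  calc ∏ t ∈ Ico i j, ((μ.gap t : ℝ) + 1) ^ ((j : ℝ) - i)⁻¹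
      ≤ ∑ t ∈ Ico i j, ((j : ℝ) - i)⁻¹ * ((μ.gap t : ℝ) + 1) :=
        geom_mean_le_arith_mean_weighted _ _ _ (fun _ _ => (inv_pos.2 hji).le) hweights
          (fun _ _ => by positivity)
    _ = _ := by rw [← mul_sum, ← rowLen_sub_rowLen_add_eq_sum μ hij.le, div_eq_inv_mul]

theorem prod_prod_rpow_eq_prod_rpow_weylWeight (n : ℕ) {x : ℕ → ℝ} (hx : ∀ t, 0 < x t) :
    ∏ p ∈ (range n ×ˢ range n).filter (fun p => p.1 < p.2),
        ∏ t ∈ Ico p.1 p.2, x t ^ ((p.2 : ℝ) - p.1)⁻¹ =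
      ∏ t ∈ range (n - 1), x t ^ weylWeight n t := by
  rw [prod_comm' (t' := range (n - 1)) (s' := fun t => range (t + 1) ×ˢ Ioo t n)]
  · exact prod_congr rfl fun t _ => (rpow_sum_of_pos (hx t) _ _).symm
  · intro p t
    simp only [mem_filter, mem_product, mem_range, mem_Ico, mem_Ioo]
    omega

theorem prod_gap_rpow_weylWeight_le_weylDim (n : ℕ) (μ : YoungDiagram) :
    ∏ t ∈ range (n - 1), ((μ.gap t : ℝ) + 1) ^ weylWeight n t ≤ weylDim n μ := by
  rw [← prod_prod_rpow_eq_prod_rpow_weylWeight n fun t => by positivity, weylDim]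
  refine prod_le_prod (fun _ _ => prod_nonneg fun _ _ => by positivity) fun p hp => ?_
  exact prod_gap_rpow_le_weylFactor μ (mem_filter.1 hp).2

section weylWeight

variable {n t : ℕ}

theorem sum_le_weylWeight {S : Finset (ℕ × ℕ)} (hS : S ⊆ range (t + 1) ×ˢ Ioo t n) :
    ∑ p ∈ S, ((p.2 : ℝ) - p.1)⁻¹ ≤ weylWeight n t := by
  refine sum_le_sum_of_subset_of_nonneg hS fun p hp _ => inv_nonneg.2 (sub_nonneg.2 ?_)
  simp only [mem_product, mem_range, mem_Ioo] at hp
  exact_mod_cast (show p.1 ≤ p.2 by omega)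

theorem harmonic_succ_le_weylWeight (ht : t < n - 1) : (harmonic (t + 1) : ℝ) ≤ weylWeight n t := by
  refine le_of_eq_of_le ?_ (sum_le_weylWeight (S := range (t + 1) ×ˢ {t + 1}) ?_)
  · rw [sum_product, harmonic, Rat.cast_sum, ← sum_range_reflect]
    refine sum_congr rfl fun i hi => ?_
    have hi := mem_range.1 hi
    push_cast [sum_singleton, Nat.cast_sub (show i ≤ t by omega)]
    ring
  · exact product_subset_product_right
      (singleton_subset_iff.2 (mem_Ioo.2 ⟨t.lt_succ_self, by omega⟩))

theorem harmonic_sub_le_weylWeight : (harmonic (n - 1 - t) : ℝ) ≤ weylWeight n t := by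
  refine le_of_eq_of_le ?_ (sum_le_weylWeight (S := {t} ×ˢ Ioo t n) ?_)
  · rw [sum_product, sum_singleton, harmonic, Rat.cast_sum, ← Ico_add_one_left_eq_Ioo,
      sum_Ico_eq_sum_range, show n - (t + 1) = n - 1 - t by omega]
    refine sum_congr rfl fun j _ => ?_
    push_cast
    ring
  · exact product_subset_product_left (singleton_subset_iff.2 (self_mem_range_succ t))

theorem log_le_weylWeight (ht : t < n - 1) : log (n / 2 + 1) ≤ weylWeight n t := by
  rcases le_total (n - 1 - t) (t + 1) with h | h
  · refine (log_le_log (by positivity) ?_).trans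
      ((log_add_one_le_harmonic _).trans (harmonic_succ_le_weylWeight ht))
    have : (n : ℝ) ≤ 2 * (t + 1 : ℕ) := by exact_mod_cast (by omega : n ≤ 2 * (t + 1))
    push_cast at this ⊢
    linarith
  · refine (log_le_log (by positivity) ?_).trans
      ((log_add_one_le_harmonic _).trans harmonic_sub_le_weylWeight)
    have : (n : ℝ) ≤ 2 * (n - 1 - t : ℕ) := by exact_mod_cast (by omega : n ≤ 2 * (n - 1 - t))
    push_cast
    linarith

theorem min_le_two_mul_weylWeight (ht : t < n - 1) :
    (min (t + 1) (n - 1 - t) : ℕ) ≤ 2 * weylWeight n t := by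
  set u := min (t + 1) (n - 1 - t)
  have hu : 0 < u := by omega
  set S := Ico (t + 1 - u) (t + 1) ×ˢ Ico (t + 1) (t + 1 + u)
  have hS : S ⊆ range (t + 1) ×ˢ Ioo t n := by
    intro p hp
    simp only [S, mem_product, mem_Ico, mem_range, mem_Ioo] at hp ⊢
    omega
  have hterm : ∀ p ∈ S, ((2 * u : ℕ) : ℝ)⁻¹ ≤ ((p.2 : ℝ) - p.1)⁻¹ := by
    intro p hp
    simp only [S, mem_product, mem_Ico] at hp
    have hlt : (p.1 : ℝ) + 1 ≤ p.2 := by exact_mod_cast (by omega : p.1 + 1 ≤ p.2)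
    have hle : (p.2 : ℝ) ≤ p.1 + (2 * u : ℕ) := by exact_mod_cast (by omega : p.2 ≤ p.1 + 2 * u)
    exact inv_anti₀ (by linarith) (by linarith)
  have hcard : #S = u * u := by
    rw [card_product, Nat.card_Ico, Nat.card_Ico]
    congr 1 <;> omega
  calc (u : ℝ) = #S * ((2 * u : ℕ) : ℝ)⁻¹ * 2 := by
        rw [hcard]; push_cast; field_simp
    _ ≤ (∑ p ∈ S, ((p.2 : ℝ) - p.1)⁻¹) * 2 := by
        gcongr
        simpa using card_nsmul_le_sum S _ _ hterm
    _ ≤ 2 * weylWeight n t := by rw [mul_comm]; gcongr; exact sum_le_weylWeight hS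

end weylWeight

theorem summable_and_tsum_le_prod_tsum_of_injective {α β ι : Type*} [Fintype ι]
    {f : α → ℝ} {g : ι → β → ℝ} (hf : ∀ a, 0 ≤ f a) (hg : ∀ i b, 0 ≤ g i b)
    (hgs : ∀ i, Summable (g i)) {Φ : α → ι → β} (hΦ : Function.Injective Φ)
    (hfg : ∀ a, f a ≤ ∏ i, g i (Φ a i)) :
    Summable f ∧ ∑' a, f a ≤ ∏ i, ∑' b, g i b := by
  classical
  have hsum : ∀ A : Finset α, ∑ a ∈ A, f a ≤ ∏ i, ∑' b, g i b := by
    intro A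
    calc ∑ a ∈ A, f a ≤ ∑ a ∈ A, ∏ i, g i (Φ a i) := sum_le_sum fun a _ => hfg a
      _ = ∑ b ∈ A.image Φ, ∏ i, g i (b i) :=
          (sum_image (f := fun b => ∏ i, g i (b i)) fun _ _ _ _ h => hΦ h).symm
      _ ≤ ∑ b ∈ Fintype.piFinset fun i => (A.image Φ).image (· i), ∏ i, g i (b i) :=
          sum_le_sum_of_subset_of_nonneg
            (fun b hb => Fintype.mem_piFinset.2 fun i => mem_image_of_mem _ hb)
            fun _ _ _ => prod_nonneg fun i _ => hg i _
      _ = ∏ i, ∑ b ∈ (A.image Φ).image (· i), g i b := (prod_univ_sum _ _).symm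
      _ ≤ ∏ i, ∑' b, g i b :=
          prod_le_prod (fun i _ => sum_nonneg fun _ _ => hg i _)
            fun i _ => (hgs i).sum_le_tsum _ fun _ _ => hg i _
  have hf_summable : Summable f := summable_of_sum_le hf hsum
  exact ⟨hf_summable, hf_summable.tsum_le_of_sum_le hsum⟩

theorem summable_add_one_rpow_neg {σ : ℝ} (hσ : 1 < σ) :
    Summable fun m : ℕ => ((m : ℝ) + 1) ^ (-σ) := by
  simpa using (summable_nat_add_iff 1).2 (summable_nat_rpow.2 (neg_lt_neg hσ))

theorem tsum_add_one_rpow_neg_le {σ τ : ℝ} (hτ : 1 < τ) (hτσ : τ ≤ σ) :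
    ∑' m : ℕ, ((m : ℝ) + 1) ^ (-σ) ≤ 1 + 2 ^ (τ - σ) * ∑' m : ℕ, ((m : ℝ) + 1) ^ (-τ) := by
  have hσ : 1 < σ := hτ.trans_le hτσ
  have hterm : ∀ m : ℕ, ((m + 1 : ℕ) + 1 : ℝ) ^ (-σ) ≤ 2 ^ (τ - σ) * ((m : ℝ) + 1) ^ (-τ) := by
    intro m
    have hm : (0 : ℝ) < m + 1 := by positivity
    have h2 : (2 : ℝ) ≤ (m + 1 : ℕ) + 1 := by push_cast; linarith
    calc ((m + 1 : ℕ) + 1 : ℝ) ^ (-σ)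
        = ((m + 1 : ℕ) + 1 : ℝ) ^ (τ - σ) * ((m + 1 : ℕ) + 1 : ℝ) ^ (-τ) := by
          rw [← rpow_add (by positivity)]; ring_nf
      _ ≤ 2 ^ (τ - σ) * ((m : ℝ) + 1) ^ (-τ) :=
          mul_le_mul (rpow_le_rpow_of_nonpos (by norm_num) h2 (by linarith))
            (rpow_le_rpow_of_nonpos hm (by push_cast; linarith) (by linarith))
            (by positivity) (by positivity)
  rw [(summable_add_one_rpow_neg hσ).tsum_eq_zero_add, Nat.cast_zero, zero_add, one_rpow,
    ← tsum_mul_left]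
  exact add_le_add_right (Summable.tsum_le_tsum hterm
    ((summable_nat_add_iff 1).2 (summable_add_one_rpow_neg hσ))
    ((summable_add_one_rpow_neg hτ).mul_left _)) 1

theorem weylDim_pos (n : ℕ) (μ : YoungDiagram) : 0 < weylDim n μ :=
  (prod_pos fun _ _ => by positivity).trans_le (prod_gap_rpow_weylWeight_le_weylDim n μ)

theorem weylDim_rpow_neg_le (n : ℕ) (μ : YoungDiagram) {s : ℝ} (hs : 0 ≤ s) :
    weylDim n μ ^ (-s) ≤ ∏ t ∈ range (n - 1), ((μ.gap t : ℝ) + 1) ^ (-(s * weylWeight n t)) :=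
  calc weylDim n μ ^ (-s)
      ≤ (∏ t ∈ range (n - 1), ((μ.gap t : ℝ) + 1) ^ weylWeight n t) ^ (-s) :=
        rpow_le_rpow_of_nonpos (prod_pos fun _ _ => by positivity)
          (prod_gap_rpow_weylWeight_le_weylDim n μ) (neg_nonpos.2 hs)
    _ = _ := by
        rw [← finsetProd_rpow _ _ fun _ _ => by positivity]
        refine prod_congr rfl fun t _ => ?_
        rw [← rpow_mul (by positivity), mul_neg, mul_comm]

theorem wittenZetaSU_le_prod_tsum {n : ℕ} {s : ℝ} (hs : 0 ≤ s)
    (hW : ∀ t < n - 1, 1 < s * weylWeight n t) :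
    (Summable fun lam : {l : YoungDiagram // l.colLen 0 < n} => weylDim n lam ^ (-s)) ∧
      wittenZetaSU n s ≤ ∏ t : Fin (n - 1), ∑' m : ℕ, ((m : ℝ) + 1) ^ (-(s * weylWeight n t)) :=
  summable_and_tsum_le_prod_tsum_of_injective
    (fun lam => (rpow_pos_of_pos (weylDim_pos n lam) _).le) (fun _ _ => by positivity)
    (fun t => summable_add_one_rpow_neg (hW t t.2)) (Φ := fun lam t => lam.1.gap t)
    (fun (a b : {l : YoungDiagram // l.colLen 0 < n}) h =>
      Subtype.ext (eq_of_gap_eq a.2 b.2 fun t ht => congrFun h ⟨t, ht⟩))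
    (fun lam => (weylDim_rpow_neg_le n lam hs).trans_eq (prod_range _))

theorem weylDim_bot (n : ℕ) : weylDim n ⊥ = 1 := by
  refine prod_eq_one fun p hp => ?_
  have : (p.1 : ℝ) < p.2 := Nat.cast_lt.2 (mem_filter.1 hp).2
  rw [rowLen_bot, rowLen_bot, Nat.cast_zero, sub_zero, zero_add, div_self (by linarith)]

theorem one_le_wittenZetaSU {n : ℕ} {s : ℝ} (hn : 0 < n)
    (hsum : Summable fun lam : {l : YoungDiagram // l.colLen 0 < n} => weylDim n lam ^ (-s)) :
    1 ≤ wittenZetaSU n s := by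
  have hbot : (⊥ : YoungDiagram).colLen 0 < n := by
    rwa [show (⊥ : YoungDiagram).colLen 0 = 0 by simp [colLen]]
  calc 1 = weylDim n (⊥ : YoungDiagram) ^ (-s) := by rw [weylDim_bot, one_rpow]
    _ ≤ wittenZetaSU n s :=
        hsum.le_tsum ⟨⊥, hbot⟩ fun lam _ => (rpow_pos_of_pos (weylDim_pos n lam) _).le

theorem wittenZetaSU_le_exp {n : ℕ} {s : ℝ} (hs : 0 ≤ s)
    (hW : ∀ t < n - 1, 2 ≤ s * weylWeight n t) :
    wittenZetaSU n s ≤ exp ((∑' m : ℕ, ((m : ℝ) + 1) ^ (-2 : ℝ)) *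
      ∑ t ∈ range (n - 1), (2 : ℝ) ^ (2 - s * weylWeight n t)) := by
  set c := ∑' m : ℕ, ((m : ℝ) + 1) ^ (-2 : ℝ)
  calc wittenZetaSU n s
      ≤ ∏ t : Fin (n - 1), ∑' m : ℕ, ((m : ℝ) + 1) ^ (-(s * weylWeight n t)) :=
        (wittenZetaSU_le_prod_tsum hs fun t ht => by linarith [hW t ht]).2
    _ ≤ ∏ t : Fin (n - 1), (1 + (2 : ℝ) ^ (2 - s * weylWeight n t) * c) :=
        prod_le_prod (fun _ _ => tsum_nonneg fun _ => by positivity)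
          fun t _ => tsum_add_one_rpow_neg_le one_lt_two (hW t t.2)
    _ ≤ exp (∑ t : Fin (n - 1), (2 : ℝ) ^ (2 - s * weylWeight n t) * c) :=
        prod_one_add_le_exp_sum _ fun _ => by positivity
    _ = _ := by rw [sum_range, ← sum_mul, mul_comm]

theorem sum_range_pow_min_le {r : ℝ} (hr0 : 0 < r) (hr1 : r < 1) (N : ℕ) :
    ∑ t ∈ range N, r ^ min (t + 1) (N - t) ≤ 2 * (1 - r)⁻¹ :=
  calc ∑ t ∈ range N, r ^ min (t + 1) (N - t) ≤ ∑ t ∈ range N, (r ^ t + r ^ (N - 1 - t)) := by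
        refine sum_le_sum fun t ht => ?_
        have ht := mem_range.1 ht
        rcases min_choice (t + 1) (N - t) with h | h <;> rw [h]
        · exact (pow_le_pow_of_le_one hr0.le hr1.le t.le_succ).trans
            (le_add_of_nonneg_right (by positivity))
        · exact (pow_le_pow_of_le_one hr0.le hr1.le (by omega)).trans
            (le_add_of_nonneg_left (by positivity))
    _ = 2 * ∑ t ∈ range N, r ^ t := by
        rw [sum_add_distrib, sum_range_reflect (r ^ ·) N]; ring
    _ ≤ 2 * (1 - r)⁻¹ := by
        gcongr
        rw [← tsum_geometric_of_lt_one hr0.le hr1]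
        exact (summable_geometric_of_lt_one hr0.le hr1).sum_le_tsum _ fun _ _ => by positivity

theorem sum_two_rpow_sub_weylWeight_le (n : ℕ) {s : ℝ} (hs : 0 < s) :
    ∑ t ∈ range (n - 1), (2 : ℝ) ^ (2 - s * weylWeight n t) ≤
      2 ^ (2 - s * log (n / 2 + 1) / 2) * (2 * (1 - 2 ^ (-s / 4))⁻¹) := by
  set r : ℝ := 2 ^ (-s / 4)
  have hr1 : r < 1 := rpow_lt_one_of_one_lt_of_neg one_lt_two (by linarith)
  calc ∑ t ∈ range (n - 1), (2 : ℝ) ^ (2 - s * weylWeight n t)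
      ≤ ∑ t ∈ range (n - 1), 2 ^ (2 - s * log (n / 2 + 1) / 2) * r ^ min (t + 1) (n - 1 - t) := by
        refine sum_le_sum fun t ht => ?_
        have ht := mem_range.1 ht
        have hw : log (n / 2 + 1) / 2 + (min (t + 1) (n - 1 - t) : ℕ) / 4 ≤ weylWeight n t := by
          linarith [log_le_weylWeight ht, min_le_two_mul_weylWeight ht]
        rw [← rpow_natCast, ← rpow_mul zero_le_two, ← rpow_add two_pos]
        refine rpow_le_rpow_of_exponent_le one_le_two ?_
        linarith [mul_le_mul_of_nonneg_left hw hs.le]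
    _ = 2 ^ (2 - s * log (n / 2 + 1) / 2) * ∑ t ∈ range (n - 1), r ^ min (t + 1) (n - 1 - t) :=
        (mul_sum ..).symm
    _ ≤ _ := by gcongr; exact sum_range_pow_min_le (by positivity) hr1 (n - 1)

theorem tendsto_log_div_two_add_one :
    Tendsto (fun n : ℕ => log (n / 2 + 1)) atTop atTop :=
  tendsto_log_atTop.comp <| tendsto_atTop_add_const_right _ 1 <|
    tendsto_natCast_atTop_atTop.atTop_div_const two_pos

theorem tendsto_sum_two_rpow_sub_weylWeight {s : ℝ} (hs : 0 < s) :
    Tendsto (fun n : ℕ => ∑ t ∈ range (n - 1), (2 : ℝ) ^ (2 - s * weylWeight n t)) atTop (𝓝 0) := by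
  have hexp : Tendsto (fun n : ℕ => 2 - s * log (n / 2 + 1) / 2) atTop atBot :=
    tendsto_atBot_add_const_left _ 2 <| tendsto_neg_atTop_atBot.comp <|
      (tendsto_log_div_two_add_one.const_mul_atTop (half_pos hs)).congr fun n => by ring
  have hbound := ((tendsto_rpow_atBot_of_base_gt_one 2 one_lt_two).comp hexp).mul_const
    (2 * (1 - (2 : ℝ) ^ (-s / 4))⁻¹)
  rw [zero_mul] at hbound
  exact tendsto_of_tendsto_of_tendsto_of_le_of_le tendsto_const_nhds hbound
    (fun n => sum_nonneg fun _ _ => by positivity) fun n => sum_two_rpow_sub_weylWeight_le n hs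

/-- For every `s > 0`, the Witten zeta function `ζ(s;n)` of `SU(n)` converges for all
sufficiently large `n`, and `ζ(s;n) → 1` as `n → ∞`. -/
theorem wittenZetaSU_tendsto_one (s : ℝ) (hs : 0 < s) :
    (∀ᶠ n : ℕ in atTop,
      Summable fun lam : {l : YoungDiagram // l.colLen 0 < n} =>
        (weylDim n (lam : YoungDiagram)) ^ (-s)) ∧
    Tendsto (fun n : ℕ => wittenZetaSU n s) atTop (nhds 1) := by
  have hW : ∀ᶠ n : ℕ in atTop, ∀ t < n - 1, 2 ≤ s * weylWeight n t := by
    filter_upwards [tendsto_log_div_two_add_one.eventually_ge_atTop (2 / s)] with n hn t ht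
    have := mul_le_mul_of_nonneg_left (hn.trans (log_le_weylWeight ht)) hs.le
    rwa [mul_div_cancel₀ _ hs.ne'] at this
  have hsum : ∀ᶠ n : ℕ in atTop,
      Summable fun lam : {l : YoungDiagram // l.colLen 0 < n} => weylDim n lam ^ (-s) :=
    hW.mono fun n hn => (wittenZetaSU_le_prod_tsum hs.le fun t ht => by linarith [hn t ht]).1
  refine ⟨hsum, ?_⟩
  have hupper : Tendsto (fun n : ℕ => exp ((∑' m : ℕ, ((m : ℝ) + 1) ^ (-2 : ℝ)) *
      ∑ t ∈ range (n - 1), (2 : ℝ) ^ (2 - s * weylWeight n t))) atTop (𝓝 1) := by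
    simpa using ((tendsto_sum_two_rpow_sub_weylWeight hs).const_mul _).rexp
  refine tendsto_of_tendsto_of_tendsto_of_le_of_le' tendsto_const_nhds hupper ?_ ?_
  · filter_upwards [hsum, eventually_gt_atTop 0] with n hn hn0
    exact one_le_wittenZetaSU hn0 hn
  · filter_upwards [hW] with n hn
    exact wittenZetaSU_le_exp hs.le hn
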